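/- Let f : ℝ^d → ℝ be convex and (ρ, K₀, K_ρ)-smooth with K₀, K_ρ > 0 and f* = inf f > −∞, attained at a minimizer w* ∈ ℝ^d. Let w₀ ∈ ℝ^d, D₀ = ‖w₀ − w*‖ and Δ₀ = f(w₀) − f* < ∞. Consider gradient descent with the constant learning rate η = (1/(8√2 + 8)) · min{1/K₀, 1/(3^ρ K_ρ Δ₀^ρ)}, i.e. w_{t+1} = w_t − η ∇f(w_t). Then for every T ≥ 1: Δ_{t+1} ≤ Δ_t for all t < T, where Δ_t = f(w_t) − f*, and f(w_{T−1}) − f(w*) ≤ D₀² / (2 η T) ≤ (4√2 + 4) · (K₀ D₀² + 3^ρ K_ρ Δ₀^ρ D₀²) / T. -/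

import Mathlib

/-!
With `L = K₀ + K_ρ Δ₀^ρ`, the Hessian is bounded by `L` on the convex sublevel set
`{f ≤ f(w₀)}`, and the learning rate satisfies `η L ≤ 1`. A gradient step of length `η` never
leaves the sublevel set of its starting point (a continuity argument along the segment), so the
classical descent lemma `f(w_{t+1}) ≤ f(w_t) - (η/2)‖∇f(w_t)‖²` holds at every iterate, and all
iterates stay in `{f ≤ f(w₀)}`. Combined with first-order convexity it gives
`‖w_{t+1} - w*‖² ≤ ‖w_t - w*‖² - 2η Δ_{t+1}`, which telescopes; the missing term `2η Δ_{T-1}`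
is bounded by `‖w_{T-1} - w*‖²` through the quadratic upper bound at the minimizer, where
`∇f(w*) = 0`. Finally `1/η ≤ (8√2 + 8)(K₀ + 3^ρ K_ρ Δ₀^ρ)`.
-/

open Set Filter Topology
open scoped Gradient RealInnerProductSpace

section Calculus

variable {E : Type*} [NormedAddCommGroup E] [InnerProductSpace ℝ E] [CompleteSpace E]
  {f : E → ℝ}

theorem ContDiff.differentiable_gradient (hf : ContDiff ℝ 2 f) : Differentiable ℝ (∇ f) := by
  have : Differentiable ℝ (fderiv ℝ f) :=
    (hf.fderiv_right (m := 1) (by norm_num)).differentiable one_ne_zero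
  exact fun y => (InnerProductSpace.toDual ℝ E).symm.differentiableAt.comp y (this y)

theorem HasDerivAt.eventually_nhdsGT_lt_of_neg {g : ℝ → ℝ} {g' u : ℝ} (h : HasDerivAt g g' u)
    (hg' : g' < 0) : ∀ᶠ s in 𝓝[>] u, g s < g u := by
  filter_upwards [((hasDerivAt_iff_tendsto_slope.1 h).mono_left (nhdsGT_le_nhdsNE u)).eventually
    (eventually_lt_nhds hg'), self_mem_nhdsWithin] with s hs hus
  exact (slope_neg_iff_of_le (le_of_lt hus)).1 hs

theorem hasDerivAt_comp_add_smul (hf : Differentiable ℝ f) (x v : E) (s : ℝ) :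
    HasDerivAt (fun s : ℝ => f (x + s • v)) ⟪∇ f (x + s • v), v⟫ s := by
  rw [inner_gradient_left]
  have hline : HasDerivAt (fun s : ℝ => x + s • v) v s := by
    simpa using ((hasDerivAt_id s).smul_const v).const_add x
  exact (hf _).hasFDerivAt.comp_hasDerivAt s hline

theorem ConvexOn.add_inner_gradient_le (hconv : ConvexOn ℝ univ f) (hf : Differentiable ℝ f)
    (x y : E) : f x + ⟪∇ f x, y - x⟫ ≤ f y := by
  have hline : ConvexOn ℝ univ (fun s : ℝ => f (x + s • (y - x))) := by
    simpa [Function.comp_def, AffineMap.lineMap_apply_module', add_comm] using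
      hconv.comp_affineMap (AffineMap.lineMap (k := ℝ) x y)
  have := hline.le_slope_of_hasDerivAt (mem_univ 0) (mem_univ 1) zero_lt_one
    (hasDerivAt_comp_add_smul hf x (y - x) 0)
  simp only [slope_def_field, zero_smul, add_zero, one_smul, add_sub_cancel, sub_zero,
    div_one] at this
  linarith

theorem Convex.inner_gradient_add_smul_le {s : Set E} (hs : Convex ℝ s)
    (hg : Differentiable ℝ (∇ f)) {L : ℝ} (hL : ∀ z ∈ s, ‖fderiv ℝ (∇ f) z‖ ≤ L) {x v : E}
    {u : ℝ} (hx : x ∈ s) (hxv : x + u • v ∈ s) (hu : 0 ≤ u) :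
    ⟪∇ f (x + u • v), v⟫ ≤ ⟪∇ f x, v⟫ + L * u * ‖v‖ ^ 2 := by
  have hlip : ‖∇ f (x + u • v) - ∇ f x‖ ≤ L * ‖x + u • v - x‖ :=
    hs.norm_image_sub_le_of_norm_fderiv_le (fun z _ => hg z) hL hx hxv
  rw [add_sub_cancel_left, norm_smul, Real.norm_of_nonneg hu] at hlip
  calc ⟪∇ f (x + u • v), v⟫ = ⟪∇ f x, v⟫ + ⟪∇ f (x + u • v) - ∇ f x, v⟫ := by
        rw [inner_sub_left]; ring
    _ ≤ ⟪∇ f x, v⟫ + ‖∇ f (x + u • v) - ∇ f x‖ * ‖v‖ := by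
        gcongr; exact real_inner_le_norm _ _
    _ ≤ ⟪∇ f x, v⟫ + L * (u * ‖v‖) * ‖v‖ := by gcongr
    _ = ⟪∇ f x, v⟫ + L * u * ‖v‖ ^ 2 := by ring

theorem Convex.le_add_inner_gradient_add_sq {s : Set E} (hs : Convex ℝ s)
    (hf : Differentiable ℝ f) (hg : Differentiable ℝ (∇ f)) {L : ℝ}
    (hL : ∀ z ∈ s, ‖fderiv ℝ (∇ f) z‖ ≤ L) {x y : E} (hx : x ∈ s) (hy : y ∈ s) :
    f y ≤ f x + ⟪∇ f x, y - x⟫ + L / 2 * ‖y - x‖ ^ 2 := by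
  set v := y - x
  set φ : ℝ → ℝ := fun u => f (x + u • v) - u * ⟪∇ f x, v⟫ - L / 2 * u ^ 2 * ‖v‖ ^ 2
  have hφ : ∀ u, HasDerivAt φ (⟪∇ f (x + u • v), v⟫ - ⟪∇ f x, v⟫ - L * u * ‖v‖ ^ 2) u :=
    fun u => (((hasDerivAt_comp_add_smul hf x v u).sub
      ((hasDerivAt_id u).mul_const ⟪∇ f x, v⟫)).sub
      (((hasDerivAt_pow 2 u).const_mul (L / 2)).mul_const (‖v‖ ^ 2))).congr_deriv
      (by rw [show (2:ℕ) - 1 = 1 from rfl]; push_cast; ring)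
  have hanti : AntitoneOn φ (Icc 0 1) := by
    refine antitoneOn_of_hasDerivWithinAt_nonpos (convex_Icc 0 1)
      (fun u _ => (hφ u).continuousAt.continuousWithinAt) (fun u _ => (hφ u).hasDerivWithinAt)
      fun u hu => ?_
    rw [interior_Icc] at hu
    have := hs.inner_gradient_add_smul_le hg hL hx
      (hs.add_smul_sub_mem hx hy (Ioo_subset_Icc_self hu)) hu.1.le
    linarith
  have := hanti (left_mem_Icc.2 zero_le_one) (right_mem_Icc.2 zero_le_one) zero_le_one
  simp only [φ, v, zero_smul, one_smul, add_zero, add_sub_cancel] at this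
  linarith

theorem ConvexOn.apply_sub_smul_gradient_le_self (hconv : ConvexOn ℝ univ f)
    (hf : Differentiable ℝ f) (hg : Differentiable ℝ (∇ f)) {x : E} {L η : ℝ}
    (hL : ∀ y ∈ {y ∈ univ | f y ≤ f x}, ‖fderiv ℝ (∇ f) y‖ ≤ L) (hη : 0 ≤ η)
    (hηL : η * L ≤ 1) : f (x - η • ∇ f x) ≤ f x := by
  set G := ∇ f x
  rcases eq_or_ne G 0 with hG | hG
  · simp [hG]
  have hS : Convex ℝ {y ∈ univ | f y ≤ f x} := hconv.convex_le (f x)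
  set A := {s : ℝ | f (x + s • -G) ≤ f x}
  -- While `x - s • G` stays in the sublevel set, the gradient is `L`-Lipschitz on the segment,
  -- so the directional derivative along `-G` stays negative up to `s = η ≤ 1 / L`.
  have hA : Icc 0 η ⊆ A := by
    refine IsClosed.Icc_subset_of_forall_mem_nhdsWithin ?_ (by simp [A]) ?_
    · exact (isClosed_le (hf.continuous.comp (by fun_prop)) continuous_const).inter isClosed_Icc
    rintro u ⟨huA, hu0, huη⟩
    have hLu : L * u < 1 := by nlinarith [mul_le_mul_of_nonneg_right hηL hu0]
    have hslope : ⟪∇ f (x + u • -G), -G⟫ < 0 := by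
      have := hS.inner_gradient_add_smul_le hg hL ⟨mem_univ x, le_rfl⟩ ⟨mem_univ _, huA⟩ hu0
      rw [inner_neg_right, inner_neg_right, real_inner_self_eq_norm_sq, norm_neg] at this
      rw [inner_neg_right]
      nlinarith [mul_pos (sub_pos.2 hLu) (by positivity : 0 < ‖G‖ ^ 2)]
    filter_upwards [(hasDerivAt_comp_add_smul hf x (-G) u).eventually_nhdsGT_lt_of_neg hslope]
      with s hs
    exact hs.le.trans huA
  simpa [A, sub_eq_add_neg] using hA (right_mem_Icc.2 hη)

theorem ConvexOn.apply_sub_smul_gradient_le (hconv : ConvexOn ℝ univ f)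
    (hf : Differentiable ℝ f) (hg : Differentiable ℝ (∇ f)) {x : E} {L η : ℝ}
    (hL : ∀ y ∈ {y ∈ univ | f y ≤ f x}, ‖fderiv ℝ (∇ f) y‖ ≤ L) (hη : 0 ≤ η)
    (hηL : η * L ≤ 1) : f (x - η • ∇ f x) ≤ f x - η / 2 * ‖∇ f x‖ ^ 2 := by
  have hquad := (hconv.convex_le (f x)).le_add_inner_gradient_add_sq hf hg hL
    ⟨mem_univ x, le_rfl⟩ ⟨mem_univ _, hconv.apply_sub_smul_gradient_le_self hf hg hL hη hηL⟩
  rw [sub_sub_cancel_left, inner_neg_right, real_inner_smul_right, real_inner_self_eq_norm_sq,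
    norm_neg, norm_smul, Real.norm_of_nonneg hη] at hquad
  nlinarith [mul_le_mul_of_nonneg_right hηL (mul_nonneg hη (sq_nonneg ‖∇ f x‖))]

end Calculus

section GradientDescent

variable {E : Type*} [NormedAddCommGroup E] [InnerProductSpace ℝ E] [CompleteSpace E]
  {f : E → ℝ} {w : ℕ → E} {η L : ℝ}

theorem gradientDescent_sufficient_decrease (hconv : ConvexOn ℝ univ f)
    (hf : Differentiable ℝ f) (hg : Differentiable ℝ (∇ f))
    (hL : ∀ y, f y ≤ f (w 0) → ‖fderiv ℝ (∇ f) y‖ ≤ L) (hη : 0 ≤ η) (hηL : η * L ≤ 1)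
    (hrec : ∀ t, w (t + 1) = w t - η • ∇ f (w t)) (t : ℕ) :
    f (w (t + 1)) ≤ f (w t) - η / 2 * ‖∇ f (w t)‖ ^ 2 := by
  have hstep : ∀ t, f (w t) ≤ f (w 0) →
      f (w (t + 1)) ≤ f (w t) - η / 2 * ‖∇ f (w t)‖ ^ 2 := fun t ht =>
    hrec t ▸ hconv.apply_sub_smul_gradient_le hf hg (fun y hy => hL y (hy.2.trans ht)) hη hηL
  have hsub : ∀ t, f (w t) ≤ f (w 0) := by
    intro t
    induction t with
    | zero => exact le_rfl
    | succ n ih => linarith [hstep n ih, show 0 ≤ η / 2 * ‖∇ f (w n)‖ ^ 2 by positivity]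
  exact hstep t (hsub t)

theorem antitone_comp_gradientDescent (hconv : ConvexOn ℝ univ f)
    (hf : Differentiable ℝ f) (hg : Differentiable ℝ (∇ f))
    (hL : ∀ y, f y ≤ f (w 0) → ‖fderiv ℝ (∇ f) y‖ ≤ L) (hη : 0 ≤ η) (hηL : η * L ≤ 1)
    (hrec : ∀ t, w (t + 1) = w t - η • ∇ f (w t)) : Antitone (f ∘ w) :=
  antitone_nat_of_succ_le fun t => by
    show f (w (t + 1)) ≤ f (w t)
    linarith [gradientDescent_sufficient_decrease hconv hf hg hL hη hηL hrec t,
      show 0 ≤ η / 2 * ‖∇ f (w t)‖ ^ 2 by positivity]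

theorem gradientDescent_dist_sq_succ_le (hconv : ConvexOn ℝ univ f)
    (hf : Differentiable ℝ f) (hg : Differentiable ℝ (∇ f))
    (hL : ∀ y, f y ≤ f (w 0) → ‖fderiv ℝ (∇ f) y‖ ≤ L) (hη : 0 ≤ η) (hηL : η * L ≤ 1)
    (hrec : ∀ t, w (t + 1) = w t - η • ∇ f (w t)) (z : E) (t : ℕ) :
    ‖w (t + 1) - z‖ ^ 2 ≤ ‖w t - z‖ ^ 2 - 2 * η * (f (w (t + 1)) - f z) := by
  have hexpand : ‖w (t + 1) - z‖ ^ 2 =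
      ‖w t - z‖ ^ 2 - 2 * η * ⟪∇ f (w t), w t - z⟫ + η ^ 2 * ‖∇ f (w t)‖ ^ 2 := by
    rw [hrec t, sub_right_comm, norm_sub_sq_real, real_inner_smul_right, norm_smul,
      Real.norm_eq_abs, mul_pow, sq_abs, real_inner_comm]
    ring
  have hfirst := hconv.add_inner_gradient_le hf (w t) z
  have hdecrease := gradientDescent_sufficient_decrease hconv hf hg hL hη hηL hrec t
  rw [← neg_sub, inner_neg_right] at hfirst
  nlinarith

theorem gradientDescent_dist_sq_add_le (hconv : ConvexOn ℝ univ f)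
    (hf : Differentiable ℝ f) (hg : Differentiable ℝ (∇ f))
    (hL : ∀ y, f y ≤ f (w 0) → ‖fderiv ℝ (∇ f) y‖ ≤ L) (hη : 0 ≤ η) (hηL : η * L ≤ 1)
    (hrec : ∀ t, w (t + 1) = w t - η • ∇ f (w t)) (z : E) (t : ℕ) :
    ‖w t - z‖ ^ 2 + 2 * η * t * (f (w t) - f z) ≤ ‖w 0 - z‖ ^ 2 := by
  induction t with
  | zero => simp
  | succ n ih =>
    have hdist := gradientDescent_dist_sq_succ_le hconv hf hg hL hη hηL hrec z n
    have hanti : f (w (n + 1)) ≤ f (w n) :=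
      antitone_comp_gradientDescent hconv hf hg hL hη hηL hrec n.le_succ
    push_cast
    nlinarith [mul_le_mul_of_nonneg_left hanti (by positivity : (0 : ℝ) ≤ 2 * η * n)]

theorem gradientDescent_two_mul_succ_mul_sub_le (hconv : ConvexOn ℝ univ f)
    (hf : Differentiable ℝ f) (hg : Differentiable ℝ (∇ f))
    (hL : ∀ y, f y ≤ f (w 0) → ‖fderiv ℝ (∇ f) y‖ ≤ L) (hη : 0 ≤ η) (hηL : η * L ≤ 1)
    (hrec : ∀ t, w (t + 1) = w t - η • ∇ f (w t)) {z : E} (hz : ∀ v, f z ≤ f v) (t : ℕ) :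
    2 * η * (t + 1) * (f (w t) - f z) ≤ ‖w 0 - z‖ ^ 2 := by
  have hgz : ∇ f z = 0 := by
    simp [gradient, IsLocalMin.fderiv_eq_zero (Eventually.of_forall hz)]
  have hsub : f (w t) ≤ f (w 0) := antitone_comp_gradientDescent hconv hf hg hL hη hηL hrec
    (Nat.zero_le t)
  have hquad := (hconv.convex_le (f (w t))).le_add_inner_gradient_add_sq hf hg
    (fun y hy => hL y (hy.2.trans hsub)) ⟨mem_univ z, hz _⟩ ⟨mem_univ (w t), le_rfl⟩
  rw [hgz, inner_zero_left, add_zero] at hquad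
  have htel := gradientDescent_dist_sq_add_le hconv hf hg hL hη hηL hrec z t
  nlinarith [mul_le_mul_of_nonneg_right hηL (sq_nonneg ‖w t - z‖)]

end GradientDescent

/-- The constant learning rate `η` of the theorem, with `a = K₀` and `b = 3^ρ K_ρ Δ₀^ρ`. -/
noncomputable def stepSize (a b : ℝ) : ℝ := 1 / (8 * √2 + 8) * min (1 / a) (1 / b)

theorem stepSize_nonneg {a b : ℝ} (ha : 0 ≤ a) (hb : 0 ≤ b) : 0 ≤ stepSize a b :=
  mul_nonneg (by positivity) (le_min (by positivity) (by positivity))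

theorem stepSize_pos {a b : ℝ} (ha : 0 < a) (hb : 0 < b) : 0 < stepSize a b :=
  mul_pos (by positivity) (lt_min (by positivity) (by positivity))

theorem stepSize_mul_le_one {a b ℓ : ℝ} (ha : 0 < a) (hb : 0 ≤ b) (hℓ : ℓ ≤ a + b) :
    stepSize a b * ℓ ≤ 1 := by
  set μ := min (1 / a) (1 / b)
  have hμ : 0 ≤ μ := le_min (by positivity) (by positivity)
  have hμa : μ * a ≤ 1 := by
    calc μ * a ≤ 1 / a * a := by gcongr; exact min_le_left _ _
      _ = 1 := one_div_mul_cancel ha.ne'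
  have hμb : μ * b ≤ 1 := by
    rcases hb.eq_or_lt with rfl | hb
    · simp
    calc μ * b ≤ 1 / b * b := by gcongr; exact min_le_right _ _
      _ = 1 := one_div_mul_cancel hb.ne'
  have hc : 2 ≤ 8 * √2 + 8 := by linarith [Real.sqrt_nonneg 2]
  rw [stepSize, mul_assoc, div_mul_eq_mul_div, one_mul, div_le_one (by positivity)]
  nlinarith [mul_le_mul_of_nonneg_left hℓ hμ]

theorem div_two_mul_stepSize_mul_le {a b D T : ℝ} (ha : 0 < a) (hb : 0 ≤ b) (hD : 0 ≤ D)
    (hT : 0 ≤ T) : D / (2 * stepSize a b * T) ≤ (4 * √2 + 4) * (a * D + b * D) / T := by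
  rcases hb.eq_or_lt with rfl | hb
  · rw [stepSize, div_zero, min_eq_right (by positivity)]
    simp only [mul_zero, zero_mul, div_zero]
    positivity
  rcases hT.eq_or_lt with rfl | hT
  · simp
  set μ := min (1 / a) (1 / b)
  have hμ : 1 / (a + b) ≤ μ := le_min (one_div_le_one_div_of_le ha (by linarith))
    (one_div_le_one_div_of_le hb (by linarith))
  have hμab : 1 ≤ μ * (a + b) := by rwa [div_le_iff₀ (by positivity)] at hμ
  have hc : (4 * √2 + 4) * (2 * (1 / (8 * √2 + 8))) = 1 := by field_simp; ring
  rw [div_le_div_iff₀ (by have := stepSize_pos ha hb; positivity) hT]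
  calc D * T = 1 * (D * T) := (one_mul _).symm
    _ ≤ μ * (a + b) * (D * T) := by gcongr
    _ = (4 * √2 + 4) * (a * D + b * D) * (2 * stepSize a b * T) := by
      rw [stepSize]
      linear_combination (-(μ * (a + b) * (D * T))) * hc

theorem statement11_general (d : ℕ) (f : EuclideanSpace ℝ (Fin d) → ℝ)
    (hf : ContDiff ℝ 2 f)
    (hconv : ConvexOn ℝ Set.univ f)
    (ρ K0 Kρ : ℝ) (hρ : 0 < ρ) (hK0 : 0 < K0) (hKρ : 0 < Kρ)
    (fstar : ℝ)
    (hsmooth : ∀ v, ‖fderiv ℝ (gradient f) v‖ ≤ K0 + Kρ * (f v - fstar) ^ ρ)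
    (wstar : EuclideanSpace ℝ (Fin d))
    (hmin : ∀ v, f wstar ≤ f v) (hfstar : f wstar = fstar)
    (w : ℕ → EuclideanSpace ℝ (Fin d))
    (η : ℝ)
    (hη : η = (1 / (8 * Real.sqrt 2 + 8)) *
      min (1 / K0) (1 / (3 ^ ρ * Kρ * (f (w 0) - fstar) ^ ρ)))
    (hrec : ∀ t, w (t + 1) = w t - η • gradient f (w t))
    (T : ℕ) (hT : 1 ≤ T) :
    (∀ t < T, f (w (t + 1)) - fstar ≤ f (w t) - fstar) ∧
    (f (w (T - 1)) - f wstar ≤ ‖w 0 - wstar‖ ^ 2 / (2 * η * T)) ∧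
    (‖w 0 - wstar‖ ^ 2 / (2 * η * T) ≤
      (4 * Real.sqrt 2 + 4) * (K0 * ‖w 0 - wstar‖ ^ 2 +
        3 ^ ρ * Kρ * (f (w 0) - fstar) ^ ρ * ‖w 0 - wstar‖ ^ 2) / T) := by
  subst hfstar
  set Δ₀ := f (w 0) - f wstar with hΔ₀_def
  replace hη : η = stepSize K0 (3 ^ ρ * Kρ * Δ₀ ^ ρ) := hη
  have hΔ₀ : 0 ≤ Δ₀ := sub_nonneg.2 (hmin _)
  have hfd : Differentiable ℝ f := hf.differentiable (by norm_num)
  have hL : ∀ y, f y ≤ f (w 0) → ‖fderiv ℝ (∇ f) y‖ ≤ K0 + Kρ * Δ₀ ^ ρ := fun y hy =>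
    (hsmooth y).trans (by gcongr; exacts [sub_nonneg.2 (hmin y), by linarith])
  have hη0 : 0 ≤ η := hη ▸ stepSize_nonneg hK0.le (by positivity)
  have hηL : η * (K0 + Kρ * Δ₀ ^ ρ) ≤ 1 := hη ▸ stepSize_mul_le_one hK0 (by positivity)
    (by gcongr; nlinarith [Real.one_le_rpow (by norm_num : (1 : ℝ) ≤ 3) hρ.le,
      mul_nonneg hKρ.le (Real.rpow_nonneg hΔ₀ ρ)])
  have hanti := antitone_comp_gradientDescent hconv hfd hf.differentiable_gradient hL hη0 hηL hrec
  refine ⟨fun t _ => sub_le_sub_right (hanti t.le_succ) _, ?_,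
    hη ▸ div_two_mul_stepSize_mul_le hK0 (by positivity) (by positivity) (by positivity)⟩
  rcases hΔ₀.eq_or_lt with hΔ₀0 | hΔ₀pos
  -- `Δ₀ = 0` makes `η = 0` (Lean's `1 / 0 = 0`), and both sides of the bound vanish
  · have hwT : f (w (T - 1)) ≤ f (w 0) := hanti (Nat.zero_le _)
    calc f (w (T - 1)) - f wstar ≤ 0 := by linarith
      _ ≤ _ := by positivity
  · have hηpos : 0 < η := hη ▸ stepSize_pos hK0 (by positivity)
    obtain ⟨t, rfl⟩ : ∃ t, T = t + 1 := ⟨T - 1, by omega⟩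
    rw [le_div_iff₀ (by positivity), Nat.add_sub_cancel, mul_comm]
    push_cast
    exact gradientDescent_two_mul_succ_mul_sub_le hconv hfd hf.differentiable_gradient hL hη0
      hηL hrec hmin t

/-- GD with constant learning rate, convex case. For a convex
`(ρ, K₀, K_ρ)`-smooth function with minimizer `w*`, gradient descent with the constant
learning rate `η = (1/(8√2+8)) min{1/K₀, 1/(3^ρ K_ρ Δ₀^ρ)}` satisfies `Δ_{t+1} ≤ Δ_t` and
`f(w_{T−1}) − f(w*) ≤ D₀²/(2ηT) ≤ (4√2+4)(K₀D₀² + 3^ρ K_ρ Δ₀^ρ D₀²)/T`. -/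
theorem statement11 (d : ℕ) (f : EuclideanSpace ℝ (Fin d) → ℝ)
    (hf : ContDiff ℝ 2 f)
    (hconv : ConvexOn ℝ Set.univ f)
    (ρ K0 Kρ : ℝ) (hρ : 0 < ρ) (hK0 : 0 < K0) (hKρ : 0 < Kρ)
    (fstar : ℝ) (hglb : IsGLB (Set.range f) fstar)
    (hsmooth : ∀ v, ‖fderiv ℝ (gradient f) v‖ ≤ K0 + Kρ * (f v - fstar) ^ ρ)
    (wstar : EuclideanSpace ℝ (Fin d))
    (hmin : ∀ v, f wstar ≤ f v) (hfstar : f wstar = fstar)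
    (w : ℕ → EuclideanSpace ℝ (Fin d))
    (η : ℝ)
    (hη : η = (1 / (8 * Real.sqrt 2 + 8)) *
      min (1 / K0) (1 / (3 ^ ρ * Kρ * (f (w 0) - fstar) ^ ρ)))
    (hrec : ∀ t, w (t + 1) = w t - η • gradient f (w t))
    (T : ℕ) (hT : 1 ≤ T) :
    (∀ t < T, f (w (t + 1)) - fstar ≤ f (w t) - fstar) ∧
    (f (w (T - 1)) - f wstar ≤ ‖w 0 - wstar‖ ^ 2 / (2 * η * T)) ∧
    (‖w 0 - wstar‖ ^ 2 / (2 * η * T) ≤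
      (4 * Real.sqrt 2 + 4) * (K0 * ‖w 0 - wstar‖ ^ 2 +
        3 ^ ρ * Kρ * (f (w 0) - fstar) ^ ρ * ‖w 0 - wstar‖ ^ 2) / T) :=
  statement11_general d f hf hconv ρ K0 Kρ hρ hK0 hKρ fstar hsmooth wstar hmin hfstar w η hη hrec T
    hT
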